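/- For all n and k, the number of permutations of [n] whose one-line notation has exactly k valleys (positions i with π(i) > π(i+1) < π(i+2)) equals the number of permutations of [n+1] consisting of a single cycle that have exactly k cyclic valleys. -/

import Mathlib

open scoped Classical

noncomputable section

/-- `x` is the minimal element of its cycle under `π`. -/
def isCycMin {n : ℕ} (π : Equiv.Perm (Fin n)) (x : Fin n) : Prop :=
  ∀ y : Fin n, π.SameCycle x y → x ≤ y

/-- The minimal elements of the cycles of `π`, listed in decreasing order. -/
def cycMins {n : ℕ} (π : Equiv.Perm (Fin n)) : List (Fin n) :=
  ((List.finRange n).filter fun x => decide (isCycMin π x)).reverse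

/-- The number of elements in the cycle of `x` under `π` (a fixed point has cycle length 1). -/
def cycLen {n : ℕ} (π : Equiv.Perm (Fin n)) (x : Fin n) : ℕ :=
  Nat.card {y : Fin n // π.SameCycle x y}

/-- The cycle of `x` under `π`, written as the list `x, π x, π² x, …`. -/
def seg {n : ℕ} (π : Equiv.Perm (Fin n)) (x : Fin n) : List (Fin n) :=
  (List.range (cycLen π x)).map fun j => (π ^ j) x

/-- `Ψ(π)`: the word obtained by erasing the parentheses from the standard cycle form of `π`
(each cycle starts with its smallest element; cycles are in decreasing order of their minima). -/
def psiList {n : ℕ} (π : Equiv.Perm (Fin n)) : List (Fin n) :=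
  (cycMins π).foldr (fun m acc => seg π m ++ acc) []

/-- The word `Ψ(π)` as a function `ℕ → ℕ` (positions and values both 0-indexed). -/
def wordN {n : ℕ} (π : Equiv.Perm (Fin n)) (i : ℕ) : ℕ :=
  ((psiList π).map fun x => (x : ℕ)).getD i 0

/-- Positions `i` and `j` of the word `Ψ(π)` hold elements lying in the same cycle of `π`. -/
def sameCycleAt {n : ℕ} (π : Equiv.Perm (Fin n)) (i j : ℕ) : Prop :=
  ∃ a b : Fin n, (psiList π)[i]? = some a ∧ (psiList π)[j]? = some b ∧ π.SameCycle a b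

/-- The number of cycles of `π`, fixed points included. -/
def cyc {n : ℕ} (π : Equiv.Perm (Fin n)) : ℕ :=
  Nat.card {x : Fin n // isCycMin π x}

/-- The number of cyclic occurrences of the length-3 consecutive pattern described by `P`
in `π`: positions `i, i+1, i+2` of `Ψ(π)` whose values satisfy `P` and which all lie in the
same cycle of `π`. -/
def consecC {n : ℕ} (π : Equiv.Perm (Fin n)) (P : ℕ → ℕ → ℕ → Prop) : ℕ :=
  Nat.card {i : ℕ // i + 2 < n ∧ P (wordN π i) (wordN π (i + 1)) (wordN π (i + 2)) ∧
    sameCycleAt π i (i + 1) ∧ sameCycleAt π (i + 1) (i + 2)}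

/-- The number of positions `i` so that `w i, w (i+1), w (i+2)` (all positions `< m`)
satisfy `P`. -/
def consecLine (m : ℕ) (w : ℕ → ℕ) (P : ℕ → ℕ → ℕ → Prop) : ℕ :=
  Nat.card {i : ℕ // i + 2 < m ∧ P (w i) (w (i + 1)) (w (i + 2))}

/-- The one-line notation of a permutation `σ` of `[m]`, as a function `ℕ → ℕ`
(0-indexed positions and values). -/
def oneLine {m : ℕ} (σ : Equiv.Perm (Fin m)) (i : ℕ) : ℕ :=
  if h : i < m then (σ ⟨i, h⟩ : ℕ) else 0

/-!
For a permutation `π` of `[n+1]` with a single cycle, the standard cycle form starts at `0`, so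
`Ψ(π)` is the word `0, π 0, π² 0, …, πⁿ 0` and every cyclic triple of positions is a triple of
consecutive positions of this word. Conversely every word `e` of `[n+1]` beginning with `0` is
`Ψ` of exactly one single cycle, namely `e ∘ (k ↦ k + 1) ∘ e⁻¹`, and deleting the leading `0` and
lowering all letters by one identifies such words with permutations of `[n]`. Lowering letters
preserves valleys, and the leading `0` is never the first letter of a valley, so valleys
correspond exactly.
-/

open Equiv Function

namespace Equiv.Perm

variable {α : Type*} [Fintype α] {π : Perm α} {x : α}

theorem minimalPeriod_eq_card_of_forall_sameCycle (h : ∀ y, π.SameCycle x y) :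
    minimalPeriod π x = Fintype.card α := by
  have hperiodic : IsPeriodicPt π (orderOf π) x := by
    rw [IsPeriodicPt, IsFixedPt, iterate_eq_pow, pow_orderOf_eq_one, one_apply]
  have hpos : 0 < minimalPeriod π x :=
    minimalPeriod_pos_of_mem_periodicPts (mk_mem_periodicPts (orderOf_pos π) hperiodic)
  have hbij : Bijective fun j : Fin (minimalPeriod π x) => π^[j] x := by
    refine ⟨fun a b hab => Fin.ext (iterate_injOn_Iio_minimalPeriod a.2 b.2 hab), fun y => ?_⟩
    obtain ⟨i, rfl⟩ := (h y).exists_nat_pow_eq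
    refine ⟨⟨i % _, Nat.mod_lt i hpos⟩, ?_⟩
    simp only [iterate_mod_minimalPeriod_eq, iterate_eq_pow]
  simpa using Fintype.card_of_bijective hbij

theorem pow_mod_card_apply_of_forall_sameCycle (h : ∀ y, π.SameCycle x y) (i : ℕ) :
    (π ^ (i % Fintype.card α)) x = (π ^ i) x := by
  rw [← minimalPeriod_eq_card_of_forall_sameCycle h, ← iterate_eq_pow, ← iterate_eq_pow,
    iterate_mod_minimalPeriod_eq]

theorem injOn_pow_apply_of_forall_sameCycle (h : ∀ y, π.SameCycle x y) :
    Set.InjOn (fun j : ℕ => (π ^ j) x) (Set.Iio (Fintype.card α)) := by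
  simpa only [← minimalPeriod_eq_card_of_forall_sameCycle h, iterate_eq_pow] using
    iterate_injOn_Iio_minimalPeriod (f := π) (x := x)

end Equiv.Perm

section Patterns

variable {m : ℕ} {w w' : ℕ → ℕ} {P : ℕ → ℕ → ℕ → Prop}

theorem card_subtype_eq_card_subtype_succ {Q : ℕ → Prop} (h0 : ¬ Q 0) :
    Nat.card {i // Q i} = Nat.card {j // Q (j + 1)} :=
  Nat.card_congr
    { toFun := fun
        | ⟨0, hi⟩ => absurd hi h0
        | ⟨j + 1, hj⟩ => ⟨j, hj⟩
      invFun := fun j => ⟨j.1 + 1, j.2⟩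
      left_inv := fun
        | ⟨0, hi⟩ => absurd hi h0
        | ⟨_ + 1, _⟩ => rfl
      right_inv := fun _ => rfl }

theorem consecLine_congr (h : ∀ i < m, w i = w' i) :
    consecLine m w P = consecLine m w' P :=
  Nat.card_congr <| subtypeEquivRight fun i => and_congr_right fun hi => by
    rw [h i (by omega), h (i + 1) (by omega), h (i + 2) hi]

theorem consecLine_succ_of_not_head (h : ¬ P (w 0) (w 1) (w 2)) :
    consecLine (m + 1) w P = consecLine m (fun i => w (i + 1)) P := by
  rw [consecLine, card_subtype_eq_card_subtype_succ (fun h' => h h'.2)]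
  exact Nat.card_congr <| subtypeEquivRight fun i => by
    rw [Nat.add_right_comm i 1 2]
    exact and_congr Nat.add_lt_add_iff_right Iff.rfl

theorem consecLine_add_one (hP : ∀ a b c, P (a + 1) (b + 1) (c + 1) ↔ P a b c) :
    consecLine m (fun i => w i + 1) P = consecLine m w P := by
  simp only [consecLine, hP]

end Patterns

section StandardCycleForm

variable {n : ℕ}

theorem isCycMin_zero (π : Perm (Fin (n + 1))) : isCycMin π 0 :=
  fun y _ => Fin.zero_le y

theorem exists_isCycMin_sameCycle (π : Perm (Fin n)) (x : Fin n) :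
    ∃ m, isCycMin π m ∧ π.SameCycle x m := by
  obtain ⟨m, hxm, hmin⟩ := Set.exists_min_image {y | π.SameCycle x y} id
    (Set.toFinite _) ⟨x, Perm.SameCycle.refl π x⟩
  exact ⟨m, fun y hmy => hmin y (hxm.trans hmy), hxm⟩

theorem isCycMin_iff_eq_zero {π : Perm (Fin (n + 1))} (h : ∀ y, π.SameCycle 0 y)
    (x : Fin (n + 1)) : isCycMin π x ↔ x = 0 :=
  ⟨fun hx => le_antisymm (hx 0 (h x).symm) (Fin.zero_le x), fun hx => hx ▸ isCycMin_zero π⟩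

theorem cyc_eq_one_iff (π : Perm (Fin (n + 1))) : cyc π = 1 ↔ ∀ y, π.SameCycle 0 y := by
  constructor
  · intro h y
    obtain ⟨m, hm, hym⟩ := exists_isCycMin_sameCycle π y
    have : Subsingleton {x // isCycMin π x} := (Nat.card_eq_one_iff_unique.mp h).1
    have hm0 : m = 0 := congrArg Subtype.val (Subsingleton.elim ⟨m, hm⟩ ⟨0, isCycMin_zero π⟩)
    exact (hm0 ▸ hym).symm
  · intro h
    rw [cyc, Nat.card_congr (subtypeEquivRight (isCycMin_iff_eq_zero h)), Nat.card_unique]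

theorem psiList_of_forall_sameCycle {π : Perm (Fin (n + 1))} (h : ∀ y, π.SameCycle 0 y) :
    psiList π = (List.range (n + 1)).map fun j => (π ^ j) 0 := by
  have hmins : cycMins π = [0] := by
    simp [cycMins, isCycMin_iff_eq_zero h, List.finRange_succ]
  have hlen : cycLen π 0 = n + 1 := by
    rw [cycLen, Nat.card_congr (subtypeUnivEquiv h), Nat.card_eq_fintype_card, Fintype.card_fin]
  simp [psiList, hmins, seg, hlen]

theorem wordN_eq_of_getElem? {π : Perm (Fin n)} {i : ℕ} {a : Fin n}
    (h : (psiList π)[i]? = some a) : wordN π i = a := by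
  simp [wordN, ← List.map_eq_flatMap, h]

theorem consecC_of_forall_sameCycle {π : Perm (Fin (n + 1))} (h : ∀ y, π.SameCycle 0 y)
    (P : ℕ → ℕ → ℕ → Prop) :
    consecC π P = consecLine (n + 1) (fun i => ((π ^ i) 0 : ℕ)) P := by
  have hget : ∀ i < n + 1, (psiList π)[i]? = some ((π ^ i) 0) := fun i hi => by
    simp [psiList_of_forall_sameCycle h, List.getElem?_range hi]
  have hsame : ∀ i j, i < n + 1 → j < n + 1 → sameCycleAt π i j := fun i j hi hj =>
    ⟨_, _, hget i hi, hget j hj, (h _).symm.trans (h _)⟩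
  refine Nat.card_congr (subtypeEquivRight fun i => ?_)
  constructor
  · rintro ⟨hi, hP, -⟩
    rw [wordN_eq_of_getElem? (hget i (by omega)), wordN_eq_of_getElem? (hget (i + 1) (by omega)),
      wordN_eq_of_getElem? (hget (i + 2) hi)] at hP
    exact ⟨hi, hP⟩
  · rintro ⟨hi, hP⟩
    refine ⟨hi, ?_, hsame _ _ (by omega) (by omega), hsame _ _ (by omega) hi⟩
    rwa [wordN_eq_of_getElem? (hget i (by omega)), wordN_eq_of_getElem? (hget (i + 1) (by omega)),
      wordN_eq_of_getElem? (hget (i + 2) hi)]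

end StandardCycleForm

section FullCycles

variable {n : ℕ}

theorem finRotate_pow_apply_zero (k : Fin (n + 1)) : (finRotate (n + 1) ^ (k : ℕ)) 0 = k := by
  rw [← Perm.iterate_eq_pow, ← finCycle_eq_finRotate_iterate, finCycle_apply, zero_add]

/-- The cycle `(e 0, e 1, …, e n)`. -/
def cycleThrough (e : Perm (Fin (n + 1))) : Perm (Fin (n + 1)) :=
  e * finRotate (n + 1) * e⁻¹

theorem cycleThrough_pow_apply (e : Perm (Fin (n + 1))) (k : Fin (n + 1)) :
    (cycleThrough e ^ (k : ℕ)) (e 0) = e k := by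
  rw [cycleThrough, conj_pow, Perm.mul_apply, Perm.mul_apply, Perm.inv_def, symm_apply_apply,
    finRotate_pow_apply_zero]

theorem sameCycle_cycleThrough (e : Perm (Fin (n + 1))) (y : Fin (n + 1)) :
    (cycleThrough e).SameCycle (e 0) y :=
  ⟨(e⁻¹ y : Fin (n + 1)), by
    rw [zpow_natCast, cycleThrough_pow_apply, Perm.inv_def, apply_symm_apply]⟩

def orbitEnum (π : Perm (Fin (n + 1))) (h : ∀ y, π.SameCycle 0 y) : Perm (Fin (n + 1)) :=
  Equiv.ofBijective (fun k : Fin (n + 1) => (π ^ (k : ℕ)) 0) <|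
    Finite.injective_iff_bijective.mp fun a b hab =>
      Fin.ext <| Perm.injOn_pow_apply_of_forall_sameCycle h
        (by simpa using a.is_le) (by simpa using b.is_le) hab

theorem orbitEnum_apply (π : Perm (Fin (n + 1))) (h : ∀ y, π.SameCycle 0 y) (k : Fin (n + 1)) :
    orbitEnum π h k = (π ^ (k : ℕ)) 0 :=
  rfl

theorem orbitEnum_add_one (π : Perm (Fin (n + 1))) (h : ∀ y, π.SameCycle 0 y) (k : Fin (n + 1)) :
    orbitEnum π h (k + 1) = π (orbitEnum π h k) := by
  have hmod := Perm.pow_mod_card_apply_of_forall_sameCycle h ((k : ℕ) + 1)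
  rw [Fintype.card_fin] at hmod
  rw [orbitEnum_apply, orbitEnum_apply, Fin.val_add, Fin.val_one', Nat.add_mod_mod, hmod,
    pow_succ', Perm.mul_apply]

def cycleThroughEquiv :
    {e : Perm (Fin (n + 1)) // e 0 = 0} ≃ {π : Perm (Fin (n + 1)) // ∀ y, π.SameCycle 0 y} where
  toFun e := ⟨cycleThrough e, by simpa [e.2] using sameCycle_cycleThrough e.1⟩
  invFun π := ⟨orbitEnum π π.2, by simp [orbitEnum_apply]⟩
  left_inv e := by
    refine Subtype.ext (Equiv.ext fun k => ?_)
    simpa [orbitEnum_apply, e.2] using cycleThrough_pow_apply e.1 k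
  right_inv π := by
    refine Subtype.ext (Equiv.ext fun x => ?_)
    obtain ⟨k, rfl⟩ := (orbitEnum π π.2).surjective x
    simp [cycleThrough, finRotate_apply, orbitEnum_add_one]

def permFixingZeroEquiv : Perm (Fin n) ≃ {e : Perm (Fin (n + 1)) // e 0 = 0} where
  toFun τ := ⟨Perm.decomposeFin.symm (0, τ), Perm.decomposeFin_symm_apply_zero 0 τ⟩
  invFun e := (Perm.decomposeFin e.1).2
  left_inv τ := by simp
  right_inv e := by
    have hfst : (Perm.decomposeFin e.1).1 = 0 := by simp [Perm.decomposeFin, e.2]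
    exact Subtype.ext (Perm.decomposeFin.symm_apply_eq.mpr (Prod.ext hfst.symm rfl))

def fullCycleEquiv : Perm (Fin n) ≃ {π : Perm (Fin (n + 1)) // ∀ y, π.SameCycle 0 y} :=
  permFixingZeroEquiv.trans cycleThroughEquiv

theorem fullCycleEquiv_pow_apply_zero (τ : Perm (Fin n)) (i : Fin n) :
    ((fullCycleEquiv τ : Perm (Fin (n + 1))) ^ ((i : ℕ) + 1)) 0 = (τ i).succ := by
  have h := cycleThrough_pow_apply (Perm.decomposeFin.symm (0, τ)) i.succ
  rwa [Perm.decomposeFin_symm_apply_zero, Perm.decomposeFin_symm_apply_succ, swap_self,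
    refl_apply, Fin.val_succ] at h

theorem consecC_fullCycleEquiv {P : ℕ → ℕ → ℕ → Prop} (τ : Perm (Fin n))
    (hP : ∀ a b c, P (a + 1) (b + 1) (c + 1) ↔ P a b c) (hP0 : ∀ b c, ¬ P 0 b c) :
    consecC (fullCycleEquiv τ : Perm (Fin (n + 1))) P = consecLine n (oneLine τ) P := by
  set π := (fullCycleEquiv τ).1
  calc consecC π P = consecLine (n + 1) (fun i => ((π ^ i) 0 : ℕ)) P :=
        consecC_of_forall_sameCycle (fullCycleEquiv τ).2 P
    _ = consecLine n (fun i => ((π ^ (i + 1)) 0 : ℕ)) P :=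
        consecLine_succ_of_not_head (by simpa using hP0 _ _)
    _ = consecLine n (fun i => oneLine τ i + 1) P := consecLine_congr fun i hi => by
        rw [oneLine, dif_pos hi, ← Fin.val_succ]
        exact congrArg Fin.val (fullCycleEquiv_pow_apply_zero τ ⟨i, hi⟩)
    _ = consecLine n (oneLine τ) P := consecLine_add_one hP

end FullCycles

/-- The number of permutations of `[n]` with `k` valleys in one-line notation equals the
number of single-cycle permutations of `[n+1]` with `k` cyclic valleys. -/
theorem valleys_eq_single_cycle_valleys (n k : ℕ) :
    Nat.card {τ : Equiv.Perm (Fin n) //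
        consecLine n (oneLine τ) (fun a b c => b < a ∧ b < c) = k}
      = Nat.card {π : Equiv.Perm (Fin (n + 1)) //
          cyc π = 1 ∧ consecC π (fun a b c => b < a ∧ b < c) = k} := by
  have hvalleys (τ : Perm (Fin n)) :
      consecC (fullCycleEquiv τ : Perm (Fin (n + 1))) (fun a b c => b < a ∧ b < c) =
        consecLine n (oneLine τ) (fun a b c => b < a ∧ b < c) :=
    consecC_fullCycleEquiv τ (fun a b c => by omega) (fun b c => by omega)
  calc _ = Nat.card {π : {π : Perm (Fin (n + 1)) // ∀ y, π.SameCycle 0 y} //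
          consecC π.1 (fun a b c => b < a ∧ b < c) = k} :=
        Nat.card_congr (fullCycleEquiv.subtypeEquiv fun τ => by rw [hvalleys])
    _ = _ := Nat.card_congr <|
        (subtypeSubtypeEquivSubtypeInter (fun π : Perm (Fin (n + 1)) => ∀ y, π.SameCycle 0 y)
          (fun π => consecC π (fun a b c => b < a ∧ b < c) = k)).trans <|
        subtypeEquivRight fun π => by rw [cyc_eq_one_iff]
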